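/- Fix positive integers d, C ≥ 2, m ≥ 2, a focus level α ∈ [0,1], a function g : ℝ^d → ℝ^C, background vectors b_1,…,b_{m−1} ∈ ℝ^d, and foreground vectors f_1,…,f_C ∈ ℝ^d. Then the class-averaged fixed-focus hard-attention loss satisfies (1/C) Σ_{y=1}^C [ −α log σ_y( g(f_y) ) − ((1−α)/(m−1)) Σ_{j=1}^{m−1} log σ_y( g(b_j) ) ] ≥ (1−α) log C. In particular, for any α < 1 the fixed-focus hard-attention loss (averaged over classes, with the same background segments appearing under every class label) is bounded below by the positive constant (1−α) log C, uniformly over all classification functions g. -/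

import Mathlib

/-!
The foreground terms are nonnegative, since a softmax probability is at most one, so they
can be dropped. Each background segment appears under every class label, so its contribution
summed over the labels is `-∑_y log σ_y(z)` for one fixed logit vector `z`. As the `σ_y(z)`
are positive and sum to one, summing `log (C σ_y(z)) ≤ C σ_y(z) - 1` over `y` gives
`∑_y log σ_y(z) ≤ -C log C`. The weights `(1 - α)/(m - 1)` of the `m - 1` background segments
add up to `1 - α`.
-/

open scoped BigOperators

/-- Softmax of a finite family of reals. -/
noncomputable def softmax {ι : Type*} [Fintype ι] (z : ι → ℝ) (k : ι) : ℝ :=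
  Real.exp (z k) / ∑ l, Real.exp (z l)

open Finset Real

section Softmax

variable {ι : Type*} [Fintype ι]

lemma sum_exp_pos [Nonempty ι] (z : ι → ℝ) : 0 < ∑ l, exp (z l) :=
  sum_pos (fun l _ => exp_pos (z l)) univ_nonempty

lemma softmax_pos [Nonempty ι] (z : ι → ℝ) (k : ι) : 0 < softmax z k :=
  div_pos (exp_pos (z k)) (sum_exp_pos z)

lemma softmax_le_one [Nonempty ι] (z : ι → ℝ) (k : ι) : softmax z k ≤ 1 := by
  rw [softmax, div_le_one (sum_exp_pos z)]
  exact single_le_sum (fun l _ => (exp_pos (z l)).le) (mem_univ k)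

lemma log_softmax_nonpos [Nonempty ι] (z : ι → ℝ) (k : ι) : log (softmax z k) ≤ 0 :=
  log_nonpos (softmax_pos z k).le (softmax_le_one z k)

lemma sum_softmax [Nonempty ι] (z : ι → ℝ) : ∑ k, softmax z k = 1 := by
  simp_rw [softmax, ← sum_div]
  exact div_self (sum_exp_pos z).ne'

lemma sum_log_le_neg_card_mul_log_card {p : ι → ℝ} (hp : ∀ i, 0 < p i)
    (hp_sum : ∑ i, p i = 1) :
    ∑ i, log (p i) ≤ -(Fintype.card ι * log (Fintype.card ι)) := by
  set n : ℝ := (Fintype.card ι : ℝ)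
  have hterm : ∀ i, log n + log (p i) ≤ n * p i - 1 := fun i => by
    have hn : 0 < n := Nat.cast_pos.mpr (Fintype.card_pos_iff.mpr ⟨i⟩)
    rw [← log_mul hn.ne' (hp i).ne']
    exact log_le_sub_one_of_pos (mul_pos hn (hp i))
  have hsum : ∑ i, (log n + log (p i)) ≤ ∑ i, (n * p i - 1) := sum_le_sum fun i _ => hterm i
  simp only [sum_add_distrib, sum_sub_distrib, ← mul_sum, hp_sum, sum_const, card_univ,
    nsmul_eq_mul] at hsum
  linarith

lemma sum_log_softmax_le [Nonempty ι] (z : ι → ℝ) :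
    ∑ k, log (softmax z k) ≤ -(Fintype.card ι * log (Fintype.card ι)) :=
  sum_log_le_neg_card_mul_log_card (softmax_pos z) (sum_softmax z)

lemma sum_sum_log_softmax_le [Nonempty ι] {κ : Type*} [Fintype κ] (z : κ → ι → ℝ) :
    ∑ k, ∑ j, log (softmax (z j) k) ≤
      -(Fintype.card κ * (Fintype.card ι * log (Fintype.card ι))) := by
  rw [sum_comm, neg_mul_eq_mul_neg, ← nsmul_eq_mul, ← card_univ, ← sum_const]
  exact sum_le_sum fun j _ => sum_log_softmax_le (z j)

end Softmax

theorem fixed_focus_hard_attention_loss_lower_bound_general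
    (d C m : ℕ) (hC : 2 ≤ C) (hm : 2 ≤ m)
    (α : ℝ) (hα : α ∈ Set.Icc (0 : ℝ) 1)
    (g : EuclideanSpace ℝ (Fin d) → Fin C → ℝ)
    (b : Fin (m - 1) → EuclideanSpace ℝ (Fin d))
    (f : Fin C → EuclideanSpace ℝ (Fin d)) :
    (1 - α) * Real.log C ≤
      (C : ℝ)⁻¹ * ∑ y : Fin C,
        (-(α * Real.log (softmax (g (f y)) y))
          - ((1 - α) / ((m : ℝ) - 1)) * ∑ j, Real.log (softmax (g (b j)) y)) := by
  obtain ⟨hα0, hα1⟩ := hα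
  have : Nonempty (Fin C) := Fin.pos_iff_nonempty.mp (by omega)
  have hC_pos : (0 : ℝ) < C := by exact_mod_cast (by omega : 0 < C)
  have hm_pos : (0 : ℝ) < (m : ℝ) - 1 := by
    have : (2 : ℝ) ≤ m := by exact_mod_cast hm
    linarith
  set w := (1 - α) / ((m : ℝ) - 1)
  have hw : w * ((m : ℝ) - 1) = 1 - α := div_mul_cancel₀ _ hm_pos.ne'
  have hforeground : 0 ≤ ∑ y : Fin C, -(α * log (softmax (g (f y)) y)) :=
    sum_nonneg fun y _ =>
      neg_nonneg.mpr (mul_nonpos_of_nonneg_of_nonpos hα0 (log_softmax_nonpos _ y))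
  have hbackground : w * ∑ y : Fin C, ∑ j, log (softmax (g (b j)) y) ≤
      w * -(((m : ℝ) - 1) * (C * log C)) := by
    have hcard := sum_sum_log_softmax_le (fun j => g (b j))
    rw [Fintype.card_fin, Fintype.card_fin, Nat.cast_sub (by omega : 1 ≤ m), Nat.cast_one]
      at hcard
    exact mul_le_mul_of_nonneg_left hcard (div_nonneg (by linarith) hm_pos.le)
  rw [mul_neg, ← mul_assoc, hw] at hbackground
  rw [le_inv_mul_iff₀ hC_pos, sum_sub_distrib, ← mul_sum]
  linarith

/-- the class-averaged fixed-focus hard-attention loss is bounded below by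
`(1−α) log C`, uniformly over all classification functions `g`. -/
theorem fixed_focus_hard_attention_loss_lower_bound
    (d C m : ℕ) (hd : 0 < d) (hC : 2 ≤ C) (hm : 2 ≤ m)
    (α : ℝ) (hα : α ∈ Set.Icc (0 : ℝ) 1)
    (g : EuclideanSpace ℝ (Fin d) → Fin C → ℝ)
    (b : Fin (m - 1) → EuclideanSpace ℝ (Fin d))
    (f : Fin C → EuclideanSpace ℝ (Fin d)) :
    (1 - α) * Real.log C ≤
      (C : ℝ)⁻¹ * ∑ y : Fin C,
        (-(α * Real.log (softmax (g (f y)) y))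
          - ((1 - α) / ((m : ℝ) - 1)) * ∑ j, Real.log (softmax (g (b j)) y)) :=
  fixed_focus_hard_attention_loss_lower_bound_general d C m hC hm α hα g b f
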